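/- Let Ω⊊ℝ² be a bounded domain with a Whitney covering 𝒲 (constant C_𝒲) and an admissible chain structure with constants c₁,C₁. Let 0<s<ℓ. Then there is a constant C, depending only on s, ℓ, C_𝒲, c₁ and C₁, such that for every P∈𝒲 and every nonnegative G∈L¹(Ω) (extended by 0 outside Ω): Σ_{(Q,S)∈𝒲×𝒲 with P∈[Q,S]} ℓ(Q)^{ℓ−s} · ℓ(S)² · D(Q,S)^{−(2+ℓ)} · ∫_Q G dm ≤ C · ℓ(P)^{−s} · ∫_P ( MG(x) + M(MG)(x) ) dm(x). -/

import Mathlib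

/-!
Fix `P` and a point `x ∈ P`, and put `ν = G dm`. If `P` lies in the first half of the chain
`[Q, S]`, then `D(Q, P) ≤ c₁ ℓ(P)`, so `Q` lies in a ball of radius `≈ ℓ(P)` around `x`, while
`D(S, P) ≲ D(Q, S)` because `ℓ(P) ≤ C₁ D(Q, S)`; in the second half the roles of `Q` and `S` are
exchanged. So the double sum is dominated by two products of single sums over `𝒲`: sums over the
cubes near `P`, bounded by the `ν`- or Lebesgue measure of a ball around `x`, and sums
`Σ D(Q, P)^{-(2+α)} ν(Q)`, which split into dyadic annuli around `x` and become geometric series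
bounded by `ℓ(P)^{-α} MG(x)`. Both products are `≲ ℓ(P)^{2-s} MG(x)`, and averaging over `x ∈ P`
bounds the sum by `ℓ(P)^{-s} ∫_P MG`.
-/

open MeasureTheory Metric Set
open scoped ENNReal

noncomputable section

/-- A dyadic cube in the plane, encoded by its generation `n` (side length `2^n`) and the
lattice coordinates `k, j` of its lower-left corner. -/
abbrev Cube : Type := ℤ × ℤ × ℤ

/-- The open dyadic square associated to the code `c`. -/
def cubeSet (c : Cube) : Set ℂ :=
  {z : ℂ | (c.2.1 : ℝ) * (2:ℝ) ^ c.1 < z.re ∧ z.re < ((c.2.1 : ℝ) + 1) * (2:ℝ) ^ c.1 ∧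
           (c.2.2 : ℝ) * (2:ℝ) ^ c.1 < z.im ∧ z.im < ((c.2.2 : ℝ) + 1) * (2:ℝ) ^ c.1}

/-- Side length `ℓ(Q)` of a dyadic cube. -/
def side (c : Cube) : ℝ := (2:ℝ) ^ c.1

/-- Distance between two subsets of the plane. -/
def setDist (A B : Set ℂ) : ℝ := sInf {d : ℝ | ∃ a ∈ A, ∃ b ∈ B, d = dist a b}

/-- Long distance `D(Q,S) = diam Q + diam S + dist(Q,S)`. -/
def longDist (q s : Cube) : ℝ :=
  diam (cubeSet q) + diam (cubeSet s) + setDist (cubeSet q) (cubeSet s)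

/-- `W` is a Whitney covering of `Ω` with constant `Cw`: pairwise disjoint open dyadic
squares whose closures cover `Ω`, with `Cw ℓ(Q) ≤ dist(Q,∂Ω) ≤ 4 Cw ℓ(Q)`. -/
def IsWhitney (Ω : Set ℂ) (Cw : ℝ) (W : Set Cube) : Prop :=
  (W.Pairwise fun q s => Disjoint (cubeSet q) (cubeSet s)) ∧
  Ω = ⋃ q ∈ W, closure (cubeSet q) ∧
  ∀ q ∈ W, Cw * side q ≤ setDist (cubeSet q) (frontier Ω) ∧
           setDist (cubeSet q) (frontier Ω) ≤ 4 * Cw * side q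

/-- `ch`, `mid` form an admissible chain structure on the Whitney covering `W`, with
constants `c₁, C₁`. -/
def IsChainStructure (W : Set Cube) (c₁ C₁ : ℝ)
    (ch : Cube → Cube → List Cube) (mid : Cube → Cube → ℕ) : Prop :=
  ∀ q ∈ W, ∀ s ∈ W,
    (ch q s).head? = some q ∧
    (ch q s).getLast? = some s ∧
    (∀ P ∈ ch q s, P ∈ W) ∧
    mid q s < (ch q s).length ∧
    (∀ i < (ch q s).length, i ≤ mid q s →
      c₁⁻¹ * side ((ch q s).getD i q) ≤ longDist q ((ch q s).getD i q) ∧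
      longDist q ((ch q s).getD i q) ≤ c₁ * side ((ch q s).getD i q)) ∧
    (∀ i < (ch q s).length, mid q s ≤ i →
      c₁⁻¹ * side ((ch q s).getD i q) ≤ longDist ((ch q s).getD i q) s ∧
      longDist ((ch q s).getD i q) s ≤ c₁ * side ((ch q s).getD i q)) ∧
    ((ch q s).map side).sum ≤ C₁ * longDist q s ∧
    c₁⁻¹ * longDist q s ≤ side ((ch q s).getD (mid q s) q) ∧
    side ((ch q s).getD (mid q s) q) ≤ c₁ * longDist q s ∧
    ∀ n : ℤ, (((ch q s).filter (fun P => decide (P.1 = n))).length : ℝ) ≤ C₁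

/-- The (uncentered over radii, centered) Hardy–Littlewood maximal operator for
`ℝ≥0∞`-valued functions on the plane. -/
def hlMax (G : ℂ → ℝ≥0∞) (x : ℂ) : ℝ≥0∞ :=
  ⨆ r ∈ Set.Ioi (0:ℝ), (volume (ball x r))⁻¹ * ∫⁻ y in ball x r, G y

lemma side_pos (c : Cube) : 0 < side c := zpow_pos two_pos _

lemma cubeSet_eq_preimage (c : Cube) :
    cubeSet c = Complex.measurableEquivRealProd ⁻¹'
      (Ioo (c.2.1 * side c) ((c.2.1 + 1) * side c) ×ˢ
        Ioo (c.2.2 * side c) ((c.2.2 + 1) * side c)) := by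
  ext z
  simp [cubeSet, side, Complex.measurableEquivRealProd, and_assoc]

lemma measurableSet_cubeSet (c : Cube) : MeasurableSet (cubeSet c) := by
  rw [cubeSet_eq_preimage]
  exact Complex.measurableEquivRealProd.measurable (measurableSet_Ioo.prod measurableSet_Ioo)

lemma volume_cubeSet (c : Cube) : volume (cubeSet c) = ENNReal.ofReal (side c ^ 2) := by
  rw [cubeSet_eq_preimage, Complex.volume_preserving_equiv_real_prod.measure_preimage
    (measurableSet_Ioo.prod measurableSet_Ioo).nullMeasurableSet, Measure.volume_eq_prod,
    Measure.prod_prod, Real.volume_Ioo, Real.volume_Ioo,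
    ← ENNReal.ofReal_mul (by linarith [side_pos c])]
  ring_nf

lemma mk_mem_cubeSet (c : Cube) {a b : ℝ} (ha : a ∈ Ioo 0 1) (hb : b ∈ Ioo 0 1) :
    (⟨(c.2.1 + a) * side c, (c.2.2 + b) * side c⟩ : ℂ) ∈ cubeSet c := by
  have hT : (0 : ℝ) < 2 ^ c.1 := side_pos c
  simp only [cubeSet, side, mem_ofPred_eq]
  refine ⟨?_, ?_, ?_, ?_⟩ <;> nlinarith [ha.1, ha.2, hb.1, hb.2]

lemma cubeSet_nonempty (c : Cube) : (cubeSet c).Nonempty :=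
  ⟨_, mk_mem_cubeSet c (a := 1 / 2) (b := 1 / 2) (by norm_num) (by norm_num)⟩

lemma dist_le_two_mul_side {c : Cube} {z w : ℂ} (hz : z ∈ cubeSet c) (hw : w ∈ cubeSet c) :
    dist z w ≤ 2 * side c := by
  obtain ⟨hz₁, hz₂, hz₃, hz₄⟩ := hz
  obtain ⟨hw₁, hw₂, hw₃, hw₄⟩ := hw
  have hre : |(z - w).re| ≤ side c := by
    rw [Complex.sub_re, abs_le, side]; constructor <;> nlinarith
  have him : |(z - w).im| ≤ side c := by
    rw [Complex.sub_im, abs_le, side]; constructor <;> nlinarith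
  rw [Complex.dist_eq]
  linarith [Complex.norm_le_abs_re_add_abs_im (z - w)]

lemma isBounded_cubeSet (c : Cube) : Bornology.IsBounded (cubeSet c) :=
  Metric.isBounded_iff.2 ⟨_, fun _ hz _ hw => dist_le_two_mul_side hz hw⟩

lemma side_le_diam_cubeSet (c : Cube) : side c ≤ diam (cubeSet c) := by
  have hz := mk_mem_cubeSet c (a := 1 / 10) (b := 1 / 10) (by norm_num) (by norm_num)
  have hw := mk_mem_cubeSet c (a := 9 / 10) (b := 9 / 10) (by norm_num) (by norm_num)
  refine le_trans ?_ (dist_le_diam_of_mem (isBounded_cubeSet c) hz hw)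
  -- the two points are `4/5` of a diagonal apart, and `(4/5) √2 > 1`
  rw [Complex.dist_eq, Complex.norm_def, Real.le_sqrt (side_pos c).le (Complex.normSq_nonneg _),
    Complex.normSq_apply]
  simp only [Complex.sub_re, Complex.sub_im]
  nlinarith [side_pos c]

section SetDist

variable {A B : Set ℂ}

lemma setDist_le {a b : ℂ} (ha : a ∈ A) (hb : b ∈ B) : setDist A B ≤ dist a b :=
  csInf_le ⟨0, by rintro _ ⟨_, _, _, _, rfl⟩; exact dist_nonneg⟩ ⟨a, ha, b, hb, rfl⟩

lemma nonempty_setDist_set (hA : A.Nonempty) (hB : B.Nonempty) :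
    {d : ℝ | ∃ a ∈ A, ∃ b ∈ B, d = dist a b}.Nonempty :=
  let ⟨a, ha⟩ := hA
  let ⟨b, hb⟩ := hB
  ⟨_, a, ha, b, hb, rfl⟩

lemma setDist_nonneg (hA : A.Nonempty) (hB : B.Nonempty) : 0 ≤ setDist A B :=
  le_csInf (nonempty_setDist_set hA hB) (by rintro _ ⟨_, _, _, _, rfl⟩; exact dist_nonneg)

lemma exists_dist_lt_setDist_add (hA : A.Nonempty) (hB : B.Nonempty) {ε : ℝ} (hε : 0 < ε) :
    ∃ a ∈ A, ∃ b ∈ B, dist a b < setDist A B + ε := by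
  obtain ⟨_, ⟨a, ha, b, hb, rfl⟩, hlt⟩ := exists_lt_of_csInf_lt (nonempty_setDist_set hA hB)
    (lt_add_of_pos_right (setDist A B) hε)
  exact ⟨a, ha, b, hb, hlt⟩

lemma setDist_comm (A B : Set ℂ) : setDist A B = setDist B A := by
  unfold setDist
  congr 1
  ext d
  constructor <;> rintro ⟨a, ha, b, hb, rfl⟩ <;> exact ⟨b, hb, a, ha, dist_comm _ _⟩

end SetDist

section LongDist

lemma longDist_comm (q s : Cube) : longDist q s = longDist s q := by
  rw [longDist, longDist, setDist_comm]
  ring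

lemma diam_le_longDist (q s : Cube) : diam (cubeSet q) ≤ longDist q s := by
  have := setDist_nonneg (cubeSet_nonempty q) (cubeSet_nonempty s)
  unfold longDist
  linarith [diam_nonneg (s := cubeSet s)]

lemma side_le_longDist_left (q s : Cube) : side q ≤ longDist q s :=
  (side_le_diam_cubeSet q).trans (diam_le_longDist q s)

lemma side_le_longDist_right (q s : Cube) : side s ≤ longDist q s :=
  longDist_comm q s ▸ side_le_longDist_left s q

lemma longDist_pos (q s : Cube) : 0 < longDist q s :=
  (side_pos q).trans_le (side_le_longDist_left q s)

lemma dist_le_longDist {q s : Cube} {x y : ℂ} (hx : x ∈ cubeSet q) (hy : y ∈ cubeSet s) :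
    dist x y ≤ longDist q s := by
  refine le_of_forall_pos_le_add fun ε hε => ?_
  obtain ⟨a, ha, b, hb, hab⟩ :=
    exists_dist_lt_setDist_add (cubeSet_nonempty q) (cubeSet_nonempty s) hε
  have := dist_triangle4 x a b y
  have := dist_le_diam_of_mem (isBounded_cubeSet q) hx ha
  have := dist_le_diam_of_mem (isBounded_cubeSet s) hb hy
  unfold longDist
  linarith

lemma longDist_triangle (a b c : Cube) : longDist a c ≤ longDist a b + longDist b c := by
  have key : setDist (cubeSet a) (cubeSet c) ≤
      setDist (cubeSet a) (cubeSet b) + diam (cubeSet b) + setDist (cubeSet b) (cubeSet c) := by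
    refine le_of_forall_pos_le_add fun ε hε => ?_
    obtain ⟨x, hx, y, hy, hxy⟩ :=
      exists_dist_lt_setDist_add (cubeSet_nonempty a) (cubeSet_nonempty b) (half_pos hε)
    obtain ⟨y', hy', z, hz, hyz⟩ :=
      exists_dist_lt_setDist_add (cubeSet_nonempty b) (cubeSet_nonempty c) (half_pos hε)
    have := setDist_le hx hz
    have := dist_triangle4 x y y' z
    have := dist_le_diam_of_mem (isBounded_cubeSet b) hy hy'
    linarith
  unfold longDist
  linarith [diam_nonneg (s := cubeSet b)]

end LongDist

lemma volume_ball_le (x : ℂ) {r : ℝ} (hr : 0 < r) :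
    volume (ball x r) ≤ ENNReal.ofReal (r ^ (2 : ℝ)) * ENNReal.ofReal 4 := by
  rw [Complex.volume_ball, Real.rpow_two, ← ENNReal.ofReal_pow hr.le, ← ENNReal.ofReal_coe_nnreal,
    NNReal.coe_real_pi]
  gcongr
  exact Real.pi_le_four

lemma setLIntegral_ball_le_hlMax (F : ℂ → ℝ≥0∞) (x : ℂ) {r : ℝ} (hr : 0 < r) :
    ∫⁻ y in ball x r, F y ≤ volume (ball x r) * hlMax F x := by
  have h0 : volume (ball x r) ≠ 0 := (measure_ball_pos volume x hr).ne'
  have htop : volume (ball x r) ≠ ∞ := measure_ball_lt_top.ne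
  calc ∫⁻ y in ball x r, F y
      = volume (ball x r) * ((volume (ball x r))⁻¹ * ∫⁻ y in ball x r, F y) := by
        rw [← mul_assoc, ENNReal.mul_inv_cancel h0 htop, one_mul]
    _ ≤ volume (ball x r) * hlMax F x := by
        gcongr
        exact le_iSup₂ (f := fun r (_ : r ∈ Ioi (0 : ℝ)) =>
          (volume (ball x r))⁻¹ * ∫⁻ y in ball x r, F y) r hr

lemma withDensity_ball_le_hlMax (F : ℂ → ℝ≥0∞) (x : ℂ) {r : ℝ} (hr : 0 < r) :
    volume.withDensity F (ball x r) ≤ volume (ball x r) * hlMax F x := by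
  rw [withDensity_apply' _]
  exact setLIntegral_ball_le_hlMax F x hr

lemma measure_ball_le_of_le_volume {ν : Measure ℂ} {x : ℂ} {M : ℝ≥0∞}
    (hν : ∀ r > 0, ν (ball x r) ≤ volume (ball x r) * M) {r : ℝ} (hr : 0 < r) :
    ν (ball x r) ≤ ENNReal.ofReal (r ^ (2 : ℝ)) * (ENNReal.ofReal 4 * M) := by
  rw [← mul_assoc]
  exact (hν r hr).trans (by gcongr; exact volume_ball_le x hr)

lemma le_mul_setLIntegral_of_forall_le {X : Type*} [MeasurableSpace X] {μ : Measure X}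
    {A : Set X} (hA : MeasurableSet A) (h0 : μ A ≠ 0) (htop : μ A ≠ ∞) {I c : ℝ≥0∞}
    (hc : c ≠ ∞) {f : X → ℝ≥0∞} (h : ∀ x ∈ A, I ≤ c * μ A * f x) : I ≤ c * ∫⁻ x in A, f x ∂μ := by
  refine (ENNReal.mul_le_mul_iff_left h0 htop).1 ?_
  calc I * μ A = ∫⁻ _ in A, I ∂μ := (setLIntegral_const A I).symm
    _ ≤ ∫⁻ x in A, c * μ A * f x ∂μ := setLIntegral_mono' hA h
    _ = c * (∫⁻ x in A, f x ∂μ) * μ A := by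
        rw [lintegral_const_mul' _ _ (ENNReal.mul_ne_top hc htop)]
        ring

protected lemma ENNReal.tsum_mul_tsum {α β : Type*} (f : α → ℝ≥0∞) (g : β → ℝ≥0∞) :
    (∑' a, f a) * ∑' b, g b = ∑' p : α × β, f p.1 * g p.2 := by
  rw [ENNReal.tsum_prod (f := fun a b => f a * g b), ← ENNReal.tsum_mul_right]
  simp only [ENNReal.tsum_mul_left]

section DisjointSums

variable {X ι : Type*} [MeasurableSpace X] [Countable ι] {μ : Measure X} {E : ι → Set X}
  {A : Set ι}

lemma tsum_indicator_measure_le (hA : A.PairwiseDisjoint E) (hE : ∀ i, MeasurableSet (E i))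
    {U : Set X} (hU : ∀ i ∈ A, E i ⊆ U) : ∑' i, A.indicator (fun i => μ (E i)) i ≤ μ U := by
  rw [← tsum_subtype, ← measure_biUnion A.to_countable hA fun i _ => hE i]
  exact measure_mono (iUnion₂_subset hU)

lemma tsum_indicator_mul_measure_le (hA : A.PairwiseDisjoint E) (hE : ∀ i, MeasurableSet (E i))
    {U : Set X} (hU : ∀ i ∈ A, E i ⊆ U) {w : ι → ℝ≥0∞} {a : ℝ≥0∞} (hw : ∀ i ∈ A, w i ≤ a) :
    ∑' i, A.indicator (fun i => w i * μ (E i)) i ≤ a * μ U := by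
  calc ∑' i, A.indicator (fun i => w i * μ (E i)) i
      ≤ ∑' i, a * A.indicator (fun i => μ (E i)) i := by
        refine ENNReal.tsum_le_tsum fun i => ?_
        rw [← indicator_const_mul]
        exact indicator_le_indicator' fun hi => mul_le_mul_left (hw i hi) _
    _ ≤ a * μ U := by
        rw [ENNReal.tsum_mul_left]
        exact mul_le_mul_right (tsum_indicator_measure_le hA hE hU) a

lemma one_sub_two_rpow_neg_pos {a : ℝ} (ha : 0 < a) : 0 < 1 - (2 : ℝ) ^ (-a) :=
  sub_pos.2 (Real.rpow_lt_one_of_one_lt_of_neg one_lt_two (neg_neg_of_pos ha))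

lemma rpow_dyadic_annulus (n : ℕ) {t α β : ℝ} (ht : 0 < t) :
    ((2 : ℝ) ^ n * t) ^ (-(β + α)) * ((2 : ℝ) ^ (n + 1) * t) ^ β =
      2 ^ β * t ^ (-α) * ((2 : ℝ) ^ (-α)) ^ n := by
  have hu : 0 < (2 : ℝ) ^ n * t := by positivity
  rw [pow_succ, mul_comm _ (2 : ℝ), mul_assoc, Real.mul_rpow zero_le_two hu.le,
    mul_left_comm, ← Real.rpow_add hu, show -(β + α) + β = -α by ring,
    Real.mul_rpow (by positivity) ht.le, ← Real.rpow_natCast_mul zero_le_two,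
    ← Real.rpow_mul_natCast zero_le_two, mul_comm (n : ℝ)]
  ring

lemma tsum_indicator_rpow_neg_mul_measure_le_of_annulus [PseudoMetricSpace X]
    (hA : A.PairwiseDisjoint E) (hE : ∀ i, MeasurableSet (E i)) {x : X} {t α β : ℝ}
    {K : ℝ≥0∞} (ht : 0 < t) (hβα : 0 ≤ β + α) {d : ι → ℝ} (n : ℕ)
    (hd : ∀ i ∈ A, 2 ^ n * t ≤ d i ∧ d i < 2 ^ (n + 1) * t)
    (hEd : ∀ i ∈ A, E i ⊆ closedBall x (d i))
    (hμ : ∀ r > 0, μ (ball x r) ≤ ENNReal.ofReal (r ^ β) * K) :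
    ∑' i, A.indicator (fun i => ENNReal.ofReal (d i ^ (-(β + α))) * μ (E i)) i ≤
      ENNReal.ofReal (2 ^ β * t ^ (-α)) * ENNReal.ofReal (2 ^ (-α)) ^ n * K := by
  have hsub : ∀ i ∈ A, E i ⊆ ball x (2 ^ (n + 1) * t) := fun i hi =>
    (hEd i hi).trans (closedBall_subset_ball (hd i hi).2)
  have hw : ∀ i ∈ A, ENNReal.ofReal (d i ^ (-(β + α))) ≤
      ENNReal.ofReal (((2 : ℝ) ^ n * t) ^ (-(β + α))) := fun i hi =>
    ENNReal.ofReal_le_ofReal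
      (Real.rpow_le_rpow_of_nonpos (by positivity) (hd i hi).1 (neg_nonpos.2 hβα))
  calc _ ≤ ENNReal.ofReal (((2 : ℝ) ^ n * t) ^ (-(β + α))) * μ (ball x (2 ^ (n + 1) * t)) :=
        tsum_indicator_mul_measure_le hA hE hsub hw
    _ ≤ ENNReal.ofReal (((2 : ℝ) ^ n * t) ^ (-(β + α))) *
          (ENNReal.ofReal (((2 : ℝ) ^ (n + 1) * t) ^ β) * K) := by
        gcongr
        exact hμ _ (by positivity)
    _ = _ := by
        rw [← mul_assoc, ← ENNReal.ofReal_mul (by positivity), rpow_dyadic_annulus n ht,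
          ENNReal.ofReal_mul (by positivity), ENNReal.ofReal_pow (by positivity)]

lemma tsum_indicator_rpow_neg_mul_measure_le [PseudoMetricSpace X]
    (hA : A.PairwiseDisjoint E) (hE : ∀ i, MeasurableSet (E i)) {x : X} {t α β : ℝ}
    {K : ℝ≥0∞} (ht : 0 < t) (hα : 0 < α) (hβ : 0 ≤ β) {d : ι → ℝ} (hd : ∀ i ∈ A, t ≤ d i)
    (hEd : ∀ i ∈ A, E i ⊆ closedBall x (d i))
    (hμ : ∀ r > 0, μ (ball x r) ≤ ENNReal.ofReal (r ^ β) * K) :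
    ∑' i, A.indicator (fun i => ENNReal.ofReal (d i ^ (-(β + α))) * μ (E i)) i ≤
      ENNReal.ofReal (2 ^ β * (1 - 2 ^ (-α))⁻¹ * t ^ (-α)) * K := by
  set g := fun i => ENNReal.ofReal (d i ^ (-(β + α))) * μ (E i)
  let An : ℕ → Set ι := fun n => {i ∈ A | (2 : ℝ) ^ n * t ≤ d i ∧ d i < 2 ^ (n + 1) * t}
  have hcover : ∀ i, A.indicator g i ≤ ∑' n, (An n).indicator g i := by
    intro i
    by_cases hi : i ∈ A
    · obtain ⟨n, hn₁, hn₂⟩ := exists_nat_pow_near ((one_le_div ht).2 (hd i hi)) one_lt_two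
      have hin : i ∈ An n := ⟨hi, (le_div_iff₀ ht).1 hn₁, (div_lt_iff₀ ht).1 hn₂⟩
      refine le_of_eq_of_le ?_ (ENNReal.le_tsum n)
      rw [indicator_of_mem hi, indicator_of_mem hin]
    · simp [indicator_of_notMem hi]
  have hq := one_sub_two_rpow_neg_pos hα
  calc ∑' i, A.indicator g i ≤ ∑' i, ∑' n, (An n).indicator g i := ENNReal.tsum_le_tsum hcover
    _ = ∑' n, ∑' i, (An n).indicator g i := ENNReal.tsum_comm
    _ ≤ ∑' n : ℕ, ENNReal.ofReal (2 ^ β * t ^ (-α)) * ENNReal.ofReal (2 ^ (-α)) ^ n * K :=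
        ENNReal.tsum_le_tsum fun n =>
          tsum_indicator_rpow_neg_mul_measure_le_of_annulus (hA.subset (sep_subset _ _)) hE ht
            (by linarith) n (fun _ hi => hi.2) (fun i hi => hEd i hi.1) hμ
    _ = ENNReal.ofReal (2 ^ β * t ^ (-α)) * (1 - ENNReal.ofReal (2 ^ (-α)))⁻¹ * K := by
        rw [ENNReal.tsum_mul_right, ENNReal.tsum_mul_left, ENNReal.tsum_geometric]
    _ = _ := by
        rw [← ENNReal.ofReal_one, ← ENNReal.ofReal_sub _ (by positivity),
          ← ENNReal.ofReal_inv_of_pos hq, ← ENNReal.ofReal_mul (by positivity)]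
        ring_nf

end DisjointSums

def nearCubes (W : Set Cube) (c : ℝ) (P : Cube) : Set Cube :=
  {q ∈ W | longDist q P ≤ c * side P}

section CubeSums

variable {W : Set Cube} {P : Cube} {x : ℂ} {ν : Measure ℂ} {M : ℝ≥0∞}

lemma tsum_nearCubes_le (hW : W.PairwiseDisjoint cubeSet) {c : ℝ} (hc : 0 < c)
    (hx : x ∈ cubeSet P) (hν : ∀ r > 0, ν (ball x r) ≤ volume (ball x r) * M) :
    ∑' q, (nearCubes W c P).indicator (fun q => ν (cubeSet q)) q ≤
      ENNReal.ofReal (16 * c ^ 2 * side P ^ 2) * M := by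
  have hT := side_pos P
  have hsub : ∀ q ∈ nearCubes W c P, cubeSet q ⊆ ball x (2 * c * side P) := fun q hq y hy =>
    calc dist y x ≤ longDist q P := dist_le_longDist hy hx
      _ ≤ c * side P := hq.2
      _ < 2 * c * side P := by nlinarith
  calc _ ≤ ν (ball x (2 * c * side P)) :=
        tsum_indicator_measure_le (hW.subset (sep_subset _ _)) measurableSet_cubeSet hsub
    _ ≤ ENNReal.ofReal ((2 * c * side P) ^ (2 : ℝ)) * (ENNReal.ofReal 4 * M) :=
        measure_ball_le_of_le_volume hν (by positivity)
    _ = _ := by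
        rw [← mul_assoc, ← ENNReal.ofReal_mul (by positivity), Real.rpow_two]
        ring_nf

lemma tsum_farCubes_le (hW : W.PairwiseDisjoint cubeSet) {α : ℝ} (hα : 0 < α)
    (hx : x ∈ cubeSet P) (hν : ∀ r > 0, ν (ball x r) ≤ volume (ball x r) * M) :
    ∑' q, W.indicator (fun q => ENNReal.ofReal (longDist q P ^ (-(2 + α))) * ν (cubeSet q)) q ≤
      ENNReal.ofReal (16 * (1 - 2 ^ (-α))⁻¹ * side P ^ (-α)) * M := by
  have := one_sub_two_rpow_neg_pos hα
  have hT := side_pos P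
  calc _ ≤ ENNReal.ofReal (2 ^ (2 : ℝ) * (1 - 2 ^ (-α))⁻¹ * side P ^ (-α)) *
        (ENNReal.ofReal 4 * M) :=
        tsum_indicator_rpow_neg_mul_measure_le hW measurableSet_cubeSet hT hα zero_le_two
          (fun q _ => side_le_longDist_right q P)
          (fun _ _ _ hy => mem_closedBall.2 (dist_le_longDist hy hx))
          fun _ => measure_ball_le_of_le_volume hν
    _ = _ := by
        rw [← mul_assoc, ← ENNReal.ofReal_mul (by positivity), Real.rpow_two]
        ring_nf

end CubeSums

section Chain

variable {W : Set Cube} {c₁ C₁ : ℝ} {ch : Cube → Cube → List Cube} {mid : Cube → Cube → ℕ}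
  {Q S P : Cube}

lemma IsChainStructure.side_le_longDist (hCS : IsChainStructure W c₁ C₁ ch mid) (hQ : Q ∈ W)
    (hS : S ∈ W) (hP : P ∈ ch Q S) : side P ≤ C₁ * longDist Q S := by
  obtain ⟨-, -, -, -, -, -, hsum, -⟩ := hCS Q hQ S hS
  refine le_trans ?_ hsum
  refine List.single_le_sum (fun _ hy => ?_) _ (List.mem_map_of_mem hP)
  obtain ⟨c, -, rfl⟩ := List.mem_map.1 hy
  exact (side_pos c).le

lemma IsChainStructure.longDist_le_of_mem (hCS : IsChainStructure W c₁ C₁ ch mid) (hQ : Q ∈ W)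
    (hS : S ∈ W) (hP : P ∈ ch Q S) :
    longDist Q P ≤ c₁ * side P ∨ longDist S P ≤ c₁ * side P := by
  obtain ⟨-, -, -, -, hfirst, hsecond, -⟩ := hCS Q hQ S hS
  obtain ⟨i, hi, rfl⟩ := List.mem_iff_getElem.1 hP
  have hget : (ch Q S).getD i Q = (ch Q S)[i] := List.getD_eq_getElem _ _ hi
  rcases le_total i (mid Q S) with h | h
  · exact Or.inl (hget ▸ (hfirst i hi h).2)
  · exact Or.inr (longDist_comm S _ ▸ hget ▸ (hsecond i hi h).2)

lemma longDist_le_of_near {a b : Cube} {c C : ℝ} (hc : 0 ≤ c)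
    (hnear : longDist a P ≤ c * side P) (hP : side P ≤ C * longDist a b) :
    longDist b P ≤ (1 + c * C) * longDist a b := by
  have := longDist_triangle b a P
  rw [longDist_comm b a] at this
  nlinarith [mul_le_mul_of_nonneg_left hP hc]

lemma rpow_neg_le_mul_rpow_neg {a b K e : ℝ} (ha : 0 < a) (hb : 0 < b) (hK : 0 < K)
    (he : 0 ≤ e) (h : b ≤ K * a) : a ^ (-e) ≤ K ^ e * b ^ (-e) :=
  calc a ^ (-e) = K ^ e * (K * a) ^ (-e) := by
        rw [Real.mul_rpow hK.le ha.le, ← mul_assoc, ← Real.rpow_add hK, add_neg_cancel,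
          Real.rpow_zero, one_mul]
    _ ≤ K ^ e * b ^ (-e) := mul_le_mul_of_nonneg_left
        (Real.rpow_le_rpow_of_nonpos hb h (neg_nonpos.2 he)) (Real.rpow_nonneg hK.le e)

lemma rpow_mul_div_rpow_le {a b D D' K σ s l : ℝ} (ha : 0 < a) (hab : a ≤ b) (hD : 0 < D)
    (hD' : 0 < D') (hK : 0 < K) (hDD : D' ≤ K * D) (hσ : 0 ≤ σ) (hsl : s ≤ l) (hl : 0 ≤ 2 + l) :
    a ^ (l - s) * σ / D ^ (2 + l) ≤ K ^ (2 + l) * b ^ (l - s) * D' ^ (-(2 + l)) * σ := by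
  rw [div_eq_mul_inv, ← Real.rpow_neg hD.le]
  have h₁ : a ^ (l - s) ≤ b ^ (l - s) := Real.rpow_le_rpow ha.le hab (by linarith)
  have h₂ := rpow_neg_le_mul_rpow_neg hD hD' hK hl hDD
  calc a ^ (l - s) * σ * D ^ (-(2 + l)) ≤ b ^ (l - s) * σ * (K ^ (2 + l) * D' ^ (-(2 + l))) :=
        mul_le_mul (mul_le_mul_of_nonneg_right h₁ hσ) h₂ (by positivity)
          (mul_nonneg (Real.rpow_nonneg (ha.le.trans hab) _) hσ)
    _ = _ := by ring

lemma chainTerm_le_of_near_first (hc₁ : 0 ≤ c₁) (hC₁ : 0 ≤ C₁) {s l : ℝ} (hs : 0 ≤ s)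
    (hsl : s ≤ l) (hnear : longDist Q P ≤ c₁ * side P) (hP : side P ≤ C₁ * longDist Q S)
    (ν : Measure ℂ) :
    ENNReal.ofReal (side Q ^ (l - s) * side S ^ 2 / longDist Q S ^ (2 + l)) * ν (cubeSet Q) ≤
      ENNReal.ofReal ((1 + c₁ * C₁) ^ (2 + l) * (c₁ * side P) ^ (l - s)) *
        (ν (cubeSet Q) * (ENNReal.ofReal (longDist S P ^ (-(2 + l))) * volume (cubeSet S))) := by
  have hK : 0 < 1 + c₁ * C₁ := by positivity
  have hκ : 0 ≤ (1 + c₁ * C₁) ^ (2 + l) * (c₁ * side P) ^ (l - s) :=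
    mul_nonneg (Real.rpow_nonneg hK.le _) (Real.rpow_nonneg (mul_nonneg hc₁ (side_pos P).le) _)
  have hw := rpow_mul_div_rpow_le (side_pos Q) ((side_le_longDist_left Q P).trans hnear)
    (longDist_pos Q S) (longDist_pos S P) hK (longDist_le_of_near hc₁ hnear hP)
    (sq_nonneg (side S)) hsl (by linarith)
  calc _ ≤ ENNReal.ofReal ((1 + c₁ * C₁) ^ (2 + l) * (c₁ * side P) ^ (l - s) *
        longDist S P ^ (-(2 + l)) * side S ^ 2) * ν (cubeSet Q) := by gcongr
    _ = _ := by
      rw [ENNReal.ofReal_mul (mul_nonneg hκ (Real.rpow_nonneg (longDist_pos S P).le _)),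
        ENNReal.ofReal_mul hκ, volume_cubeSet]
      ring

lemma chainTerm_le_of_near_second (hc₁ : 0 ≤ c₁) (hC₁ : 0 ≤ C₁) {s l : ℝ} (hs : 0 ≤ s)
    (hsl : s ≤ l) (hnear : longDist S P ≤ c₁ * side P) (hP : side P ≤ C₁ * longDist Q S)
    (ν : Measure ℂ) :
    ENNReal.ofReal (side Q ^ (l - s) * side S ^ 2 / longDist Q S ^ (2 + l)) * ν (cubeSet Q) ≤
      ENNReal.ofReal ((1 + c₁ * C₁) ^ (2 + l)) *
        (ENNReal.ofReal (longDist Q P ^ (-(2 + s))) * ν (cubeSet Q) * volume (cubeSet S)) := by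
  have hK : 0 < 1 + c₁ * C₁ := by positivity
  have hκ : 0 ≤ (1 + c₁ * C₁) ^ (2 + l) := Real.rpow_nonneg hK.le _
  have hw := rpow_mul_div_rpow_le (side_pos Q) (side_le_longDist_left Q P)
    (longDist_pos Q S) (longDist_pos Q P) hK
    (longDist_comm S Q ▸ longDist_le_of_near hc₁ hnear (longDist_comm Q S ▸ hP))
    (sq_nonneg (side S)) hsl (by linarith)
  rw [mul_assoc ((1 + c₁ * C₁) ^ (2 + l)), ← Real.rpow_add (longDist_pos Q P),
    show l - s + -(2 + l) = -(2 + s) by ring] at hw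
  calc _ ≤ ENNReal.ofReal ((1 + c₁ * C₁) ^ (2 + l) * longDist Q P ^ (-(2 + s)) *
        side S ^ 2) * ν (cubeSet Q) := by gcongr
    _ = _ := by
      rw [ENNReal.ofReal_mul (mul_nonneg hκ (Real.rpow_nonneg (longDist_pos Q P).le _)),
        ENNReal.ofReal_mul hκ, volume_cubeSet]
      ring

lemma chainTerm_le (hCS : IsChainStructure W c₁ C₁ ch mid) (hc₁ : 0 ≤ c₁) (hC₁ : 0 ≤ C₁)
    {s l : ℝ} (hs : 0 ≤ s) (hsl : s ≤ l) (hQ : Q ∈ W) (hS : S ∈ W) (hP : P ∈ ch Q S)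
    (ν : Measure ℂ) :
    ENNReal.ofReal (side Q ^ (l - s) * side S ^ 2 / longDist Q S ^ (2 + l)) * ν (cubeSet Q) ≤
      ENNReal.ofReal ((1 + c₁ * C₁) ^ (2 + l) * (c₁ * side P) ^ (l - s)) *
          ((nearCubes W c₁ P).indicator (fun q => ν (cubeSet q)) Q *
            W.indicator (fun q =>
              ENNReal.ofReal (longDist q P ^ (-(2 + l))) * volume (cubeSet q)) S) +
        ENNReal.ofReal ((1 + c₁ * C₁) ^ (2 + l)) *
          (W.indicator (fun q => ENNReal.ofReal (longDist q P ^ (-(2 + s))) * ν (cubeSet q)) Q *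
            (nearCubes W c₁ P).indicator (fun q => volume (cubeSet q)) S) := by
  have hPQS := hCS.side_le_longDist hQ hS hP
  rcases hCS.longDist_le_of_mem hQ hS hP with hnear | hnear
  · rw [indicator_of_mem (show Q ∈ nearCubes W c₁ P from ⟨hQ, hnear⟩), indicator_of_mem hS]
    exact le_add_right (chainTerm_le_of_near_first hc₁ hC₁ hs hsl hnear hPQS ν)
  · rw [indicator_of_mem hQ, indicator_of_mem (show S ∈ nearCubes W c₁ P from ⟨hS, hnear⟩)]
    exact le_add_left (chainTerm_le_of_near_second hc₁ hC₁ hs hsl hnear hPQS ν)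

lemma tsum_chain_le_add (hCS : IsChainStructure W c₁ C₁ ch mid) (hc₁ : 0 ≤ c₁)
    (hC₁ : 0 ≤ C₁) {s l : ℝ} (hs : 0 ≤ s) (hsl : s ≤ l) (ν : Measure ℂ) :
    ∑' qs : {qs : Cube × Cube // qs.1 ∈ W ∧ qs.2 ∈ W ∧ P ∈ ch qs.1 qs.2},
        ENNReal.ofReal
            (side qs.1.1 ^ (l - s) * side qs.1.2 ^ 2 / longDist qs.1.1 qs.1.2 ^ (2 + l)) *
          ν (cubeSet qs.1.1) ≤
      ENNReal.ofReal ((1 + c₁ * C₁) ^ (2 + l) * (c₁ * side P) ^ (l - s)) *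
          ((∑' q, (nearCubes W c₁ P).indicator (fun q => ν (cubeSet q)) q) *
            ∑' q, W.indicator (fun q =>
              ENNReal.ofReal (longDist q P ^ (-(2 + l))) * volume (cubeSet q)) q) +
        ENNReal.ofReal ((1 + c₁ * C₁) ^ (2 + l)) *
          ((∑' q, W.indicator (fun q =>
              ENNReal.ofReal (longDist q P ^ (-(2 + s))) * ν (cubeSet q)) q) *
            ∑' q, (nearCubes W c₁ P).indicator (fun q => volume (cubeSet q)) q) := by
  rw [ENNReal.tsum_mul_tsum, ENNReal.tsum_mul_tsum, ← ENNReal.tsum_mul_left,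
    ← ENNReal.tsum_mul_left, ← ENNReal.tsum_add]
  refine (ENNReal.tsum_le_tsum fun qs => ?_).trans
    (ENNReal.tsum_comp_le_tsum_of_injective Subtype.val_injective _)
  exact chainTerm_le hCS hc₁ hC₁ hs hsl qs.2.1 qs.2.2.1 qs.2.2.2 ν

end Chain

def chainConst (s l c₁ C₁ : ℝ) : ℝ :=
  256 * c₁ ^ 2 * (1 + c₁ * C₁) ^ (2 + l) * (c₁ ^ (l - s) / (1 - 2 ^ (-l)) + 1 / (1 - 2 ^ (-s)))

lemma chainConst_pos {s l c₁ C₁ : ℝ} (hs : 0 < s) (hsl : s < l) (hc₁ : 0 < c₁) (hC₁ : 0 ≤ C₁) :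
    0 < chainConst s l c₁ C₁ := by
  have := one_sub_two_rpow_neg_pos hs
  have := one_sub_two_rpow_neg_pos (hs.trans hsl)
  unfold chainConst
  positivity

lemma chainConst_mul_eq {s l c₁ C₁ T : ℝ} (hc₁ : 0 ≤ c₁) (hT : 0 < T) :
    chainConst s l c₁ C₁ * T ^ (-s) * T ^ 2 =
      (1 + c₁ * C₁) ^ (2 + l) * (c₁ * T) ^ (l - s) * (16 * c₁ ^ 2 * T ^ 2) *
          (16 * (1 - 2 ^ (-l))⁻¹ * T ^ (-l)) +
        (1 + c₁ * C₁) ^ (2 + l) * (16 * (1 - 2 ^ (-s))⁻¹ * T ^ (-s)) * (16 * c₁ ^ 2 * T ^ 2) := by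
  have hTpow : T ^ (l - s) * T ^ (-l) = T ^ (-s) := by
    rw [← Real.rpow_add hT]
    ring_nf
  rw [chainConst, Real.mul_rpow hc₁ hT.le]
  linear_combination (-256 * c₁ ^ 2 * (1 + c₁ * C₁) ^ (2 + l) * c₁ ^ (l - s) *
    (1 - 2 ^ (-l))⁻¹ * T ^ 2) * hTpow

lemma tsum_chain_le {W : Set Cube} (hW : W.PairwiseDisjoint cubeSet) {c₁ C₁ : ℝ}
    {ch : Cube → Cube → List Cube} {mid : Cube → Cube → ℕ}
    (hCS : IsChainStructure W c₁ C₁ ch mid) (hc₁ : 0 < c₁) (hC₁ : 0 ≤ C₁) {s l : ℝ} (hs : 0 < s)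
    (hsl : s < l) {P : Cube} {x : ℂ} (hx : x ∈ cubeSet P) {ν : Measure ℂ} {M : ℝ≥0∞}
    (hν : ∀ r > 0, ν (ball x r) ≤ volume (ball x r) * M) :
    ∑' qs : {qs : Cube × Cube // qs.1 ∈ W ∧ qs.2 ∈ W ∧ P ∈ ch qs.1 qs.2},
        ENNReal.ofReal
            (side qs.1.1 ^ (l - s) * side qs.1.2 ^ 2 / longDist qs.1.1 qs.1.2 ^ (2 + l)) *
          ν (cubeSet qs.1.1) ≤
      ENNReal.ofReal (chainConst s l c₁ C₁) * ENNReal.ofReal (side P ^ (-s)) *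
        volume (cubeSet P) * M := by
  have hT := side_pos P
  have hvol : ∀ r > 0, volume (ball x r) ≤ volume (ball x r) * 1 := fun r _ => (mul_one _).ge
  have := one_sub_two_rpow_neg_pos hs
  have := one_sub_two_rpow_neg_pos (hs.trans hsl)
  calc _ ≤ _ := tsum_chain_le_add hCS hc₁.le hC₁ hs.le hsl.le ν
    _ ≤ ENNReal.ofReal ((1 + c₁ * C₁) ^ (2 + l) * (c₁ * side P) ^ (l - s)) *
          ((ENNReal.ofReal (16 * c₁ ^ 2 * side P ^ 2) * M) *
            (ENNReal.ofReal (16 * (1 - 2 ^ (-l))⁻¹ * side P ^ (-l)) * 1)) +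
        ENNReal.ofReal ((1 + c₁ * C₁) ^ (2 + l)) *
          ((ENNReal.ofReal (16 * (1 - 2 ^ (-s))⁻¹ * side P ^ (-s)) * M) *
            (ENNReal.ofReal (16 * c₁ ^ 2 * side P ^ 2) * 1)) := by
        gcongr
        · exact tsum_nearCubes_le hW hc₁ hx hν
        · exact tsum_farCubes_le hW (hs.trans hsl) hx hvol
        · exact tsum_farCubes_le hW hs hx hν
        · exact tsum_nearCubes_le hW hc₁ hx hvol
    _ = ENNReal.ofReal (chainConst s l c₁ C₁ * side P ^ (-s) * side P ^ 2) * M := by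
        rw [chainConst_mul_eq hc₁.le hT]
        simp (disch := positivity) only [ENNReal.ofReal_add, ENNReal.ofReal_mul, mul_one]
        ring
    _ = _ := by
        have hC := (chainConst_pos hs hsl hc₁ hC₁).le
        rw [volume_cubeSet, ENNReal.ofReal_mul (mul_nonneg hC (by positivity)),
          ENNReal.ofReal_mul hC]

theorem statement10_general (s l : ℝ) (hs : 0 < s) (hsl : s < l)
    (Cw c₁ C₁ : ℝ) (hc₁ : 1 ≤ c₁) (hC₁ : 1 ≤ C₁) :
    ∃ C : ℝ, 0 < C ∧
      ∀ Ω : Set ℂ, IsOpen Ω → IsConnected Ω → Bornology.IsBounded Ω →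
      ∀ W : Set Cube, IsWhitney Ω Cw W →
      ∀ ch : Cube → Cube → List Cube, ∀ mid : Cube → Cube → ℕ,
        IsChainStructure W c₁ C₁ ch mid →
      ∀ P ∈ W, ∀ G : ℂ → ℝ, Measurable G → (∀ x, 0 ≤ G x) →
        IntegrableOn G Ω volume → (∀ x, x ∉ Ω → G x = 0) →
        (∑' qs : {qs : Cube × Cube // qs.1 ∈ W ∧ qs.2 ∈ W ∧ P ∈ ch qs.1 qs.2},
            ENNReal.ofReal
              (side qs.1.1 ^ (l - s) * side qs.1.2 ^ 2 / longDist qs.1.1 qs.1.2 ^ (2 + l)) *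
            ∫⁻ x in cubeSet qs.1.1, ENNReal.ofReal (G x))
          ≤ ENNReal.ofReal C * ENNReal.ofReal (side P ^ (-s)) *
            ∫⁻ x in cubeSet P,
              (hlMax (fun y => ENNReal.ofReal (G y)) x +
               hlMax (hlMax (fun y => ENNReal.ofReal (G y))) x) := by
  have hc₁' : 0 < c₁ := by linarith
  have hC₁' : 0 ≤ C₁ := by linarith
  refine ⟨chainConst s l c₁ C₁, chainConst_pos hs hsl hc₁' hC₁', ?_⟩
  intro Ω _ _ _ W hWh ch mid hCS P _ G _ _ _ _
  set F : ℂ → ℝ≥0∞ := fun y => ENNReal.ofReal (G y)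
  have hF : ∀ q, ∫⁻ x in cubeSet q, F x = volume.withDensity F (cubeSet q) := fun q =>
    (withDensity_apply F (measurableSet_cubeSet q)).symm
  simp only [hF]
  have hvol : volume (cubeSet P) = ENNReal.ofReal (side P ^ 2) := volume_cubeSet P
  calc _ ≤ ENNReal.ofReal (chainConst s l c₁ C₁) * ENNReal.ofReal (side P ^ (-s)) *
        ∫⁻ x in cubeSet P, hlMax F x :=
        le_mul_setLIntegral_of_forall_le (measurableSet_cubeSet P)
          (hvol ▸ (ENNReal.ofReal_pos.2 (pow_pos (side_pos P) 2)).ne')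
          (hvol ▸ ENNReal.ofReal_ne_top)
          (ENNReal.mul_ne_top ENNReal.ofReal_ne_top ENNReal.ofReal_ne_top)
          fun x hx => tsum_chain_le hWh.1 hCS hc₁' hC₁' hs hsl hx fun r hr =>
            withDensity_ball_le_hlMax F x hr
    _ ≤ _ := by
        gcongr
        exact le_self_add

/-- chain summation estimate.  For every `P ∈ 𝒲` and every nonnegative
`G ∈ L¹(Ω)` extended by zero,
`Σ_{P ∈ [Q,S]} ℓ(Q)^{ℓ-s} ℓ(S)² D(Q,S)^{-(2+ℓ)} ∫_Q G ≤ C ℓ(P)^{-s} ∫_P (MG + M²G)`. -/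
theorem statement10 (s l : ℝ) (hs : 0 < s) (hsl : s < l)
    (Cw c₁ C₁ : ℝ) (hCw : 1 < Cw) (hc₁ : 1 ≤ c₁) (hC₁ : 1 ≤ C₁) :
    ∃ C : ℝ, 0 < C ∧
      ∀ Ω : Set ℂ, IsOpen Ω → IsConnected Ω → Bornology.IsBounded Ω →
      ∀ W : Set Cube, IsWhitney Ω Cw W →
      ∀ ch : Cube → Cube → List Cube, ∀ mid : Cube → Cube → ℕ,
        IsChainStructure W c₁ C₁ ch mid →
      ∀ P ∈ W, ∀ G : ℂ → ℝ, Measurable G → (∀ x, 0 ≤ G x) →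
        IntegrableOn G Ω volume → (∀ x, x ∉ Ω → G x = 0) →
        (∑' qs : {qs : Cube × Cube // qs.1 ∈ W ∧ qs.2 ∈ W ∧ P ∈ ch qs.1 qs.2},
            ENNReal.ofReal
              (side qs.1.1 ^ (l - s) * side qs.1.2 ^ 2 / longDist qs.1.1 qs.1.2 ^ (2 + l)) *
            ∫⁻ x in cubeSet qs.1.1, ENNReal.ofReal (G x))
          ≤ ENNReal.ofReal C * ENNReal.ofReal (side P ^ (-s)) *
            ∫⁻ x in cubeSet P,
              (hlMax (fun y => ENNReal.ofReal (G y)) x +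
               hlMax (hlMax (fun y => ENNReal.ofReal (G y))) x) :=
  statement10_general s l hs hsl Cw c₁ C₁ hc₁ hC₁
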